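/- arXiv:1803.04082 — 2 statements merged into one kernel-verified Lean document; each statement's English description precedes it below -/
import Mathlib

section
/- Let d ≥ 1 and let p, q ∈ ℂ[X] be coprime polynomials with deg p = deg q = d. Suppose the rational map f = p/q commutes with the antipodal involution γ(z) = −1/z̄, expressed by the identity conj(p(−1/conj(z)))·p(z) = −conj(q(−1/conj(z)))·q(z) for every z ∈ ℂ with z ≠ 0. Then d is odd, and there exist c ∈ ℂ with |c| = 1 and points a₁, …, a_d ∈ ℂ∖{0} with aᵢ·conj(a_j) ≠ −1 for all i, j, such that p(X)·∏_{i=1}^{d}(1 + conj(aᵢ)·X) = c·q(X)·∏_{i=1}^{d}(X − aᵢ) in ℂ[X]; equivalently, f(z) = c·∏_{i=1}^{d}(z − aᵢ)/(1 + conj(aᵢ)·z) wherever defined. -/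
open Polynomial Finset

/-!
Write `p* = X ^ d · conj(p)(−1/X)` (`antipodalReflect d p`), so that the hypothesis reads
`p* p = −q* q`. By coprimality `q ∣ p*`, and comparing degrees `p* = l q` for a constant `l`;
hence also `q* = −l p`. As `p** = (−1)^d p`, this gives `(−1)^d p = −|l|² p`, so `d` is odd and
`|l| = 1`. Factoring `p = lc ∏ (X − aᵢ)` turns `p* = l q` into
`−conj(lc) ∏ (1 + conj(aᵢ) X) = l q`, the claimed identity with `c = −l lc / conj(lc)`.
A root `aᵢ = 0` would kill the coefficient of `X^d` in `p*`, and `aᵢ conj(aⱼ) = −1` would make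
`aᵢ` a common root of `p` and `q`.
-/

namespace Polynomial

theorem eval_reflect_of_ne_zero {K : Type*} [Field K] {N : ℕ} {f : K[X]} (hf : f.natDegree ≤ N)
    {z : K} (hz : z ≠ 0) : (reflect N f).eval z = z ^ N * f.eval z⁻¹ := by
  let _ := invertibleOfNonzero (inv_ne_zero hz)
  have h := eval₂_reflect_mul_pow (RingHom.id K) z⁻¹ N f hf
  rw [invOf_eq_inv, inv_inv, ← eval, ← eval] at h
  rw [← h, mul_left_comm, ← mul_pow, mul_inv_cancel₀ hz, one_pow, mul_one]

theorem eq_of_eval_eq_of_ne_zero {R : Type*} [CommRing R] [IsDomain R] [Infinite R] {p q : R[X]}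
    (h : ∀ z ≠ 0, p.eval z = q.eval z) : p = q :=
  eq_of_infinite_eval_eq p q <| (Set.finite_singleton 0).infinite_compl.mono fun z hz => h z hz

theorem exists_eq_C_mul_of_dvd_of_natDegree_le {R : Type*} [CommRing R] [IsDomain R]
    {f q : R[X]} (hq : q ≠ 0) (hdvd : q ∣ f) (hf : f.natDegree ≤ q.natDegree) :
    ∃ l, f = C l * q := by
  obtain ⟨t, rfl⟩ := hdvd
  rcases eq_or_ne t 0 with rfl | ht
  · exact ⟨0, by simp⟩
  rw [natDegree_mul hq ht] at hf
  exact ⟨t.coeff 0, by rw [mul_comm, ← eq_C_of_natDegree_eq_zero (by omega)]⟩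

theorem exists_eq_C_leadingCoeff_mul_prod_X_sub_C {K : Type*} [Field K] [IsAlgClosed K]
    {p : K[X]} {n : ℕ} (hp : p.natDegree = n) :
    ∃ a : Fin n → K, p = C p.leadingCoeff * ∏ i, (X - C (a i)) := by
  have hroots := (IsAlgClosed.splits p).natDegree_eq_card_roots
  have hcard : p.roots.toList.length = n := by rw [Multiset.length_toList, ← hp, hroots]
  refine ⟨fun i => p.roots.toList[Fin.cast hcard.symm i], ?_⟩
  conv_lhs => rw [← C_leadingCoeff_mul_prod_multiset_X_sub_C hroots.symm]
  congr 1
  conv_lhs => rw [← Multiset.coe_toList p.roots, Multiset.map_coe, Multiset.prod_coe,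
    ← Fin.prod_univ_fun_getElem]
  exact Fintype.prod_equiv (finCongr hcard) _ _ fun i => rfl

end Polynomial

noncomputable def antipodalReflect (d : ℕ) (p : ℂ[X]) : ℂ[X] :=
  reflect d ((p.map (starRingEnd ℂ)).comp (-X))

section antipodalReflect

variable {d m n : ℕ} {p q : ℂ[X]}

theorem natDegree_map_conj_comp_neg_X (p : ℂ[X]) :
    ((p.map (starRingEnd ℂ)).comp (-X)).natDegree = p.natDegree := by
  rw [natDegree_comp, natDegree_map, natDegree_neg, natDegree_X, mul_one]

theorem natDegree_antipodalReflect_le (hp : p.natDegree ≤ d) :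
    (antipodalReflect d p).natDegree ≤ d :=
  natDegree_reflect_le.trans (max_le le_rfl (by rwa [natDegree_map_conj_comp_neg_X]))

theorem eval_antipodalReflect (hp : p.natDegree ≤ d) {z : ℂ} (hz : z ≠ 0) :
    (antipodalReflect d p).eval z = z ^ d * starRingEnd ℂ (p.eval (-1 / starRingEnd ℂ z)) := by
  rw [antipodalReflect, eval_reflect_of_ne_zero (by rwa [natDegree_map_conj_comp_neg_X]) hz,
    eval_comp, eval_neg, eval_X, eval_map, ← eval₂_at_apply]
  congr 2
  simp [neg_div]

theorem coeff_antipodalReflect_self (p : ℂ[X]) :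
    (antipodalReflect d p).coeff d = starRingEnd ℂ (p.coeff 0) := by
  rw [antipodalReflect, coeff_reflect, revAt_le le_rfl, Nat.sub_self, coeff_zero_eq_eval_zero,
    eval_comp, eval_neg, eval_X, neg_zero, ← coeff_zero_eq_eval_zero, coeff_map]

theorem antipodalReflect_C_mul (c : ℂ) (p : ℂ[X]) :
    antipodalReflect d (C c * p) = C (starRingEnd ℂ c) * antipodalReflect d p := by
  rw [antipodalReflect, Polynomial.map_mul, map_C, mul_comp, C_comp, reflect_C_mul,
    antipodalReflect]

theorem antipodalReflect_mul (hp : p.natDegree ≤ m) (hq : q.natDegree ≤ n) :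
    antipodalReflect (m + n) (p * q) = antipodalReflect m p * antipodalReflect n q := by
  rw [antipodalReflect, Polynomial.map_mul, mul_comp, reflect_mul] <;>
    first | rfl | rwa [natDegree_map_conj_comp_neg_X]

theorem antipodalReflect_X_sub_C (a : ℂ) :
    antipodalReflect 1 (X - C a) = -(1 + C (starRingEnd ℂ a) * X) := by
  simp [antipodalReflect, reflect_sub, reflect_neg, sub_comp, reflect_C, ← sub_eq_neg_add]

theorem antipodalReflect_antipodalReflect (hp : p.natDegree ≤ d) :
    antipodalReflect d (antipodalReflect d p) = C ((-1) ^ d) * p := by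
  refine eq_of_eval_eq_of_ne_zero fun z hz => ?_
  have hz' : -1 / starRingEnd ℂ z ≠ 0 := by simpa using hz
  rw [eval_antipodalReflect (natDegree_antipodalReflect_le hp) hz, eval_antipodalReflect hp hz',
    eval_mul, eval_C]
  simp only [map_mul, map_pow, map_div₀, map_neg, map_one, Complex.conj_conj]
  field_simp
  rw [← mul_pow, mul_neg, mul_one_div_cancel hz, mul_comm]

theorem antipodalReflect_prod_X_sub_C {ι : Type*} (s : Finset ι) (a : ι → ℂ) :
    antipodalReflect #s (∏ i ∈ s, (X - C (a i))) =
      ∏ i ∈ s, -(1 + C (starRingEnd ℂ (a i)) * X) := by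
  classical
  induction s using Finset.induction_on with
  | empty => simp [antipodalReflect]
  | insert i s hi ih =>
    rw [prod_insert hi, prod_insert hi, card_insert_of_notMem hi, add_comm,
      antipodalReflect_mul (natDegree_X_sub_C (a i)).le
        (natDegree_finsetProd_X_sub_C_eq_card s a).le, antipodalReflect_X_sub_C, ih]

theorem antipodalReflect_eq_zero_iff (hp : p.natDegree ≤ d) :
    antipodalReflect d p = 0 ↔ p = 0 := by
  refine ⟨fun h => ?_, fun h => by simp [h, antipodalReflect]⟩
  have := antipodalReflect_antipodalReflect hp
  rw [h, antipodalReflect, Polynomial.map_zero, zero_comp, reflect_zero, eq_comm] at this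
  simpa using this

theorem antipodalReflect_prod_univ_X_sub_C_of_odd (hd : Odd d) (a : Fin d → ℂ) :
    antipodalReflect d (∏ i, (X - C (a i))) = -∏ i, (1 + C (starRingEnd ℂ (a i)) * X) := by
  have := antipodalReflect_prod_X_sub_C univ a
  rwa [prod_neg, card_univ, Fintype.card_fin, hd.neg_one_pow, neg_one_mul] at this

end antipodalReflect

section antipodalPair

variable {d : ℕ} {p q : ℂ[X]}

theorem ne_zero_of_antipodalReflect_mul_eq_neg (hpq : IsCoprime p q) (hq : q.natDegree ≤ d)
    (h : antipodalReflect d p * p = -(antipodalReflect d q * q)) : p ≠ 0 := by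
  rintro rfl
  have hq0 : antipodalReflect d q * q = 0 := by simpa [antipodalReflect] using h.symm
  rw [mul_eq_zero, antipodalReflect_eq_zero_iff hq, or_self] at hq0
  exact not_isCoprime_zero_zero (hq0 ▸ hpq)

theorem odd_and_norm_eq_one_of_antipodalReflect_eq_C_mul (hp0 : p ≠ 0) (hq0 : q ≠ 0)
    (hp : p.natDegree ≤ d) (h : antipodalReflect d p * p = -(antipodalReflect d q * q)) {l : ℂ}
    (hl : antipodalReflect d p = C l * q) : Odd d ∧ ‖l‖ = 1 := by
  have hlq : antipodalReflect d q = -(C l * p) :=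
    mul_left_cancel₀ hq0 (by linear_combination h - p * hl)
  have hsq : ((-1) ^ d : ℂ) = -(‖l‖ ^ 2 : ℝ) := by
    have := antipodalReflect_antipodalReflect hp
    rw [hl, antipodalReflect_C_mul, hlq, mul_neg, ← mul_assoc, ← C_mul, Complex.conj_mul',
      ← neg_mul, ← C_neg] at this
    exact_mod_cast C_injective (mul_right_cancel₀ hp0 this.symm)
  rcases Nat.even_or_odd d with he | ho
  · rw [he.neg_one_pow] at hsq
    have : (1 : ℝ) = -(‖l‖ ^ 2) := by exact_mod_cast hsq
    nlinarith [sq_nonneg ‖l‖]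
  · rw [ho.neg_one_pow, neg_inj] at hsq
    have : ‖l‖ ^ 2 = 1 := by exact_mod_cast hsq.symm
    exact ⟨ho, (pow_eq_one_iff_of_nonneg (norm_nonneg l) two_ne_zero).mp this⟩

theorem ne_zero_of_isRoot_of_antipodalReflect_eq_C_mul (hq : q.natDegree = d) (hq0 : q ≠ 0)
    {l : ℂ} (hl0 : l ≠ 0) (hl : antipodalReflect d p = C l * q) {a : ℂ} (ha : p.IsRoot a) :
    a ≠ 0 := by
  rintro rfl
  have := coeff_antipodalReflect_self (d := d) p
  rw [hl, coeff_C_mul, ← hq, coeff_natDegree, coeff_zero_eq_eval_zero, ha.eq_zero,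
    map_zero] at this
  exact mul_ne_zero hl0 (leadingCoeff_ne_zero.mpr hq0) this

theorem mul_conj_ne_neg_one_of_isRoot (hpq : IsCoprime p q) (hp : p.natDegree ≤ d) {l : ℂ}
    (hl0 : l ≠ 0) (hl : antipodalReflect d p = C l * q) {a b : ℂ} (ha : p.IsRoot a)
    (hb : p.IsRoot b) (ha0 : a ≠ 0) : a * starRingEnd ℂ b ≠ -1 := by
  intro hab
  have hba : -1 / starRingEnd ℂ a = b := by
    have := congrArg (starRingEnd ℂ) hab
    rw [map_mul, Complex.conj_conj, map_neg, map_one] at this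
    rw [← this, mul_div_cancel_left₀ _ (by simpa using ha0)]
  have hqa : q.IsRoot a := by
    have := eval_antipodalReflect hp ha0
    rwa [hl, eval_mul, eval_C, hba, hb.eq_zero, map_zero, mul_zero, mul_eq_zero,
      or_iff_right hl0] at this
  simpa [ha.eq_zero, hqa.eq_zero] using aeval_ne_zero_of_isCoprime hpq a

end antipodalPair

theorem exists_norm_eq_one_and_mul_eq_C_mul_mul {p q A B : ℂ[X]} {l lc : ℂ} (hl : ‖l‖ = 1)
    (hlc : lc ≠ 0) (hp : p = C lc * A) (hq : C l * q = -(C (starRingEnd ℂ lc) * B)) :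
    ∃ c : ℂ, ‖c‖ = 1 ∧ p * B = C c * q * A := by
  have hlc' : starRingEnd ℂ lc ≠ 0 := by simpa using hlc
  have hu : C (lc / starRingEnd ℂ lc) * C (starRingEnd ℂ lc) = C lc := by
    rw [← C_mul, div_mul_cancel₀ _ hlc']
  refine ⟨-(l * (lc / starRingEnd ℂ lc)), ?_, ?_⟩
  · rw [norm_neg, norm_mul, hl, norm_div, Complex.norm_conj, div_self (norm_ne_zero_iff.mpr hlc),
      one_mul]
  · rw [map_neg, map_mul]
    linear_combination B * hp + (C (lc / starRingEnd ℂ lc) * A) * hq - (A * B) * hu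

theorem antipodal_preserving_parametrization_general
    (d : ℕ) (p q : Polynomial ℂ) (hpq : IsCoprime p q)
    (hp : p.natDegree = d) (hq : q.natDegree = d)
    (hanti : ∀ z : ℂ, z ≠ 0 →
      starRingEnd ℂ (p.eval (-1 / starRingEnd ℂ z)) * p.eval z =
        -(starRingEnd ℂ (q.eval (-1 / starRingEnd ℂ z)) * q.eval z)) :
    Odd d ∧
    ∃ (c : ℂ) (a : Fin d → ℂ), ‖c‖ = 1 ∧ (∀ i, a i ≠ 0) ∧
      (∀ i j, a i * starRingEnd ℂ (a j) ≠ -1) ∧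
      p * ∏ i : Fin d, (1 + C (starRingEnd ℂ (a i)) * X) =
        C c * q * ∏ i : Fin d, (X - C (a i)) := by
  have hA : antipodalReflect d p * p = -(antipodalReflect d q * q) :=
    eq_of_eval_eq_of_ne_zero fun z hz => by
      rw [eval_mul, eval_neg, eval_mul, eval_antipodalReflect hp.le hz,
        eval_antipodalReflect hq.le hz]
      linear_combination z ^ d * hanti z hz
  have hp0 := ne_zero_of_antipodalReflect_mul_eq_neg hpq hq.le hA
  have hq0 := ne_zero_of_antipodalReflect_mul_eq_neg hpq.symm hp.le (by rw [hA, neg_neg])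
  obtain ⟨l, hl⟩ := exists_eq_C_mul_of_dvd_of_natDegree_le hq0
    (hpq.symm.dvd_of_dvd_mul_right ⟨-antipodalReflect d q, by rw [hA]; ring⟩)
    ((natDegree_antipodalReflect_le hp.le).trans hq.ge)
  obtain ⟨hodd, hl1⟩ := odd_and_norm_eq_one_of_antipodalReflect_eq_C_mul hp0 hq0 hp.le hA hl
  have hl0 : l ≠ 0 := norm_ne_zero_iff.mp (by rw [hl1]; exact one_ne_zero)
  obtain ⟨a, ha⟩ := exists_eq_C_leadingCoeff_mul_prod_X_sub_C hp
  have hroot (i : Fin d) : p.IsRoot (a i) := by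
    rw [ha, IsRoot, eval_mul, eval_prod, prod_eq_zero (mem_univ i) (by simp), mul_zero]
  have ha0 (i : Fin d) : a i ≠ 0 :=
    ne_zero_of_isRoot_of_antipodalReflect_eq_C_mul hq hq0 hl0 hl (hroot i)
  obtain ⟨c, hc, hfactor⟩ := exists_norm_eq_one_and_mul_eq_C_mul_mul
    (B := ∏ i, (1 + C (starRingEnd ℂ (a i)) * X)) hl1
    (leadingCoeff_ne_zero.mpr hp0) ha (by
      rw [← hl]
      conv_lhs => rw [ha]
      rw [antipodalReflect_C_mul, antipodalReflect_prod_univ_X_sub_C_of_odd hodd, mul_neg])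
  exact ⟨hodd, c, a, hc, ha0, fun i j =>
    mul_conj_ne_neg_one_of_isRoot hpq hp.le hl0 hl (hroot i) (hroot j) (ha0 i), hfactor⟩

/-- A degree-`d` rational map `p/q` (with `p, q` coprime of degree `d ≥ 1`) commuting with the
antipodal involution `γ(z) = −1/z̄`, i.e. satisfying
`conj(p(−1/conj z))·p(z) = −conj(q(−1/conj z))·q(z)` for all `z ≠ 0`, has odd degree and is
of the form `c·∏ᵢ (z − aᵢ)/(1 + conj(aᵢ)·z)` with `|c| = 1` and `aᵢ·conj(a_j) ≠ −1`. -/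
theorem antipodal_preserving_parametrization
    (d : ℕ) (hd : 1 ≤ d) (p q : Polynomial ℂ) (hpq : IsCoprime p q)
    (hp : p.natDegree = d) (hq : q.natDegree = d)
    (hanti : ∀ z : ℂ, z ≠ 0 →
      starRingEnd ℂ (p.eval (-1 / starRingEnd ℂ z)) * p.eval z =
        -(starRingEnd ℂ (q.eval (-1 / starRingEnd ℂ z)) * q.eval z)) :
    Odd d ∧
    ∃ (c : ℂ) (a : Fin d → ℂ), ‖c‖ = 1 ∧ (∀ i, a i ≠ 0) ∧
      (∀ i j, a i * starRingEnd ℂ (a j) ≠ -1) ∧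
      p * ∏ i : Fin d, (1 + C (starRingEnd ℂ (a i)) * X) =
        C c * q * ∏ i : Fin d, (X - C (a i)) :=
  antipodal_preserving_parametrization_general d p q hpq hp hq hanti
end

section
/- Let μ ∈ ℝ with μ < −1 and define f : ℝ∖{0} → ℝ∖{0} by f(x) = (1/μ)(x + 1/x) (note x + 1/x ≠ 0 for all real x ≠ 0, so all iterates are defined). Set p := 1/√(−μ−1). Then f(p) = −p and f(−p) = p (so {p, −p} is a 2-cycle of f), and for every x ≠ 0 there exists ε ∈ {1, −1} such that the even iterates f^{2n}(x) converge to ε·p as n → ∞; that is, every orbit in ℝ∖{0} converges to the 2-cycle {p, −p}. -/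
/-!
With `c = -μ` we have `f = -h` for the odd map `h y = (y + y⁻¹) / c`, so `f ∘ f = h ∘ h`, and it
suffices to show that the orbit of every `y > 0` under `h` converges to the positive fixed point
`p`. The Cayley transform `y ↦ (y - p) / (y + p)` maps `(0, ∞)` onto `(-1, 1)` and conjugates `h`
to the quadratic Blaschke product `w ↦ w (w + s) / (1 + s w)` with `s = (p - p⁻¹) / (p + p⁻¹)`.
On `[-r, r]` with `r < 1` this map shrinks `|w|` by the factor `(r + |s|) / (1 + r |s|) < 1`, so
its orbits tend to `0` geometrically.
-/

open Filter Topology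

noncomputable def blaschkeFactor (s w : ℝ) : ℝ := (w + s) / (1 + s * w)

noncomputable def blaschkeProduct (s w : ℝ) : ℝ := w * blaschkeFactor s w

theorem one_add_mul_pos_of_abs_lt_one {a b : ℝ} (ha : |a| < 1) (hb : |b| ≤ 1) :
    0 < 1 + a * b := by
  have : |a * b| < 1 := by
    rw [abs_mul]; exact mul_lt_one_of_nonneg_of_lt_one_left (abs_nonneg a) ha hb
  linarith [neg_abs_le (a * b)]

theorem abs_blaschkeFactor_le {s r w : ℝ} (hs : |s| < 1) (hr : r < 1) (hw : |w| ≤ r) :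
    |blaschkeFactor s w| ≤ blaschkeFactor |s| r := by
  obtain ⟨hrw, hwr⟩ := abs_le.mp hw
  have hs2 : s ^ 2 < 1 := by rw [← sq_abs]; nlinarith [abs_nonneg s]
  have hden : 0 < 1 + s * w := one_add_mul_pos_of_abs_lt_one hs (hw.trans hr.le)
  have h1 : 0 ≤ (r - w) * (1 - s ^ 2) := mul_nonneg (by linarith) (by linarith)
  have h2 : 0 ≤ (r + w) * (1 - s ^ 2) := mul_nonneg (by linarith) (by linarith)
  have h3 : 0 ≤ (r - w) * s ^ 2 := mul_nonneg (by linarith) (sq_nonneg s)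
  have h4 : 0 ≤ (r + w) * s ^ 2 := mul_nonneg (by linarith) (sq_nonneg s)
  have h5 : 0 ≤ 1 - r * w := by nlinarith
  have h6 : 0 ≤ 1 + r * w := by nlinarith
  unfold blaschkeFactor
  rw [abs_div, abs_of_pos hden, div_le_div_iff₀ hden (by nlinarith [abs_nonneg s])]
  rcases abs_cases (w + s) with ⟨h, _⟩ | ⟨h, _⟩ <;>
  rcases abs_cases s with ⟨h', _⟩ | ⟨h', _⟩ <;> rw [h, h'] <;> nlinarith

theorem blaschkeFactor_nonneg {t r : ℝ} (ht : 0 ≤ t) (hr : 0 ≤ r) : 0 ≤ blaschkeFactor t r := by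
  unfold blaschkeFactor; positivity

theorem blaschkeFactor_lt_one {t r : ℝ} (ht0 : 0 ≤ t) (ht : t < 1) (hr0 : 0 ≤ r) (hr : r < 1) :
    blaschkeFactor t r < 1 := by
  rw [blaschkeFactor, div_lt_one (by positivity)]
  nlinarith [mul_pos (sub_pos.2 ht) (sub_pos.2 hr)]

theorem abs_iterate_blaschkeProduct_le {s w : ℝ} (hs : |s| < 1) (hw : |w| < 1) (n : ℕ) :
    |(blaschkeProduct s)^[n] w| ≤ blaschkeFactor |s| |w| ^ n * |w| := by
  set k := blaschkeFactor |s| |w|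
  have hk0 : 0 ≤ k := blaschkeFactor_nonneg (abs_nonneg s) (abs_nonneg w)
  have hk1 : k < 1 := blaschkeFactor_lt_one (abs_nonneg s) hs (abs_nonneg w) hw
  induction n with
  | zero => simp
  | succ n ih =>
    set v := (blaschkeProduct s)^[n] w
    have hv : |v| ≤ |w| :=
      ih.trans (mul_le_of_le_one_left (abs_nonneg w) (pow_le_one₀ hk0 hk1.le))
    calc |(blaschkeProduct s)^[n + 1] w| = |v| * |blaschkeFactor s v| := by
          rw [Function.iterate_succ_apply', blaschkeProduct, abs_mul]
      _ ≤ (k ^ n * |w|) * k :=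
          mul_le_mul ih (abs_blaschkeFactor_le hs hw hv) (abs_nonneg _) (by positivity)
      _ = k ^ (n + 1) * |w| := by ring

theorem tendsto_iterate_blaschkeProduct {s w : ℝ} (hs : |s| < 1) (hw : |w| < 1) :
    Tendsto (fun n => (blaschkeProduct s)^[n] w) atTop (𝓝 0) := by
  have hk0 := blaschkeFactor_nonneg (abs_nonneg s) (abs_nonneg w)
  have hk1 := blaschkeFactor_lt_one (abs_nonneg s) hs (abs_nonneg w) hw
  refine squeeze_zero_norm (abs_iterate_blaschkeProduct_le hs hw) ?_
  simpa using (tendsto_pow_atTop_nhds_zero_of_lt_one hk0 hk1).mul_const |w|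

noncomputable def cayley (p y : ℝ) : ℝ := (y - p) / (y + p)

theorem abs_cayley_lt_one {p y : ℝ} (hp : 0 < p) (hy : 0 < y) : |cayley p y| < 1 := by
  rw [cayley, abs_div, abs_of_pos (add_pos hy hp), div_lt_one (add_pos hy hp), abs_lt]
  constructor <;> linarith

theorem mul_one_add_cayley_div_one_sub_cayley {p y : ℝ} (hp : 0 < p) (hy : 0 < y) :
    p * (1 + cayley p y) / (1 - cayley p y) = y := by
  have hden : 1 - cayley p y ≠ 0 := by
    linarith [le_abs_self (cayley p y), abs_cayley_lt_one hp hy]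
  rw [div_eq_iff hden]
  have : y + p ≠ 0 := by positivity
  unfold cayley
  field_simp
  ring

theorem tendsto_of_tendsto_cayley_zero {p : ℝ} {u : ℕ → ℝ} (hp : 0 < p) (hu : ∀ n, 0 < u n)
    (h : Tendsto (fun n => cayley p (u n)) atTop (𝓝 0)) : Tendsto u atTop (𝓝 p) := by
  have hlim : Tendsto (fun n => p * (1 + cayley p (u n)) / (1 - cayley p (u n))) atTop
      (𝓝 (p * (1 + 0) / (1 - 0))) :=
    ((tendsto_const_nhds.add h).const_mul p).div (tendsto_const_nhds.sub h) (by norm_num)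
  simpa only [mul_one_add_cayley_div_one_sub_cayley hp (hu _), add_zero, sub_zero, mul_one,
    div_one] using hlim

theorem blaschkeFactor_cayley {p q y : ℝ} (hp : 0 < p) (hq : 0 < q) (hy : 0 < y) :
    blaschkeFactor (cayley q p) (cayley p y) = cayley q y := by
  have hden := one_add_mul_pos_of_abs_lt_one (abs_cayley_lt_one hq hp)
    (abs_cayley_lt_one hp hy).le
  rw [blaschkeFactor, div_eq_iff hden.ne']
  unfold cayley
  field_simp
  ring

noncomputable def scaledJoukowski (c y : ℝ) : ℝ := (y + y⁻¹) / c

theorem scaledJoukowski_neg (c y : ℝ) : scaledJoukowski c (-y) = -scaledJoukowski c y := by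
  rw [scaledJoukowski, scaledJoukowski, inv_neg, ← neg_add, neg_div]

theorem scaledJoukowski_eq_self {c p : ℝ} (hp : 0 < p) (hpc : p ^ 2 * (c - 1) = 1) :
    scaledJoukowski c p = p := by
  have hc : c ≠ 0 := by rintro rfl; nlinarith
  rw [scaledJoukowski, div_eq_iff hc]
  field_simp
  linarith

theorem cayley_scaledJoukowski {c p y : ℝ} (hp : 0 < p) (hpc : p ^ 2 * (c - 1) = 1)
    (hy : 0 < y) : cayley p (scaledJoukowski c y) = cayley p y * cayley p⁻¹ y := by
  obtain rfl : c = 1 + (p ^ 2)⁻¹ := by field_simp; linarith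
  unfold cayley scaledJoukowski
  field_simp
  ring

theorem tendsto_iterate_scaledJoukowski {c p y : ℝ} (hp : 0 < p) (hpc : p ^ 2 * (c - 1) = 1)
    (hy : 0 < y) : Tendsto (fun n => (scaledJoukowski c)^[n] y) atTop (𝓝 p) := by
  have hc : 0 < c := by nlinarith
  have hmaps : Set.MapsTo (scaledJoukowski c) (Set.Ioi 0) (Set.Ioi 0) := fun z (hz : 0 < z) =>
    show 0 < scaledJoukowski c z by unfold scaledJoukowski; positivity
  have hpos : ∀ n, 0 < (scaledJoukowski c)^[n] y := fun n => hmaps.iterate n hy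
  set s := cayley p⁻¹ p
  have hconj :
      ∀ n, cayley p ((scaledJoukowski c)^[n] y) = (blaschkeProduct s)^[n] (cayley p y) := by
    intro n
    induction n with
    | zero => rfl
    | succ n ih =>
      rw [Function.iterate_succ_apply', Function.iterate_succ_apply', ← ih,
        cayley_scaledJoukowski hp hpc (hpos n), blaschkeProduct,
        blaschkeFactor_cayley hp (inv_pos.2 hp) (hpos n)]
  refine tendsto_of_tendsto_cayley_zero hp hpos ?_
  simpa only [hconj] using
    tendsto_iterate_blaschkeProduct (abs_cayley_lt_one (inv_pos.2 hp) hp) (abs_cayley_lt_one hp hy)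

theorem iterate_two_mul_neg_comp {α : Type*} [InvolutiveNeg α] {g : α → α}
    (hg : ∀ x, g (-x) = -g x) (n : ℕ) : (fun x => -g x)^[2 * n] = g^[2 * n] := by
  have hsq : (fun x => -g x)^[2] = g^[2] := funext fun x => by simp [hg]
  rw [Function.iterate_mul, Function.iterate_mul, hsq]

/-- For `μ < −1` and `f(x) = (1/μ)(x + 1/x)`, the points `±p` with `p = 1/√(−μ−1)` form a
2-cycle of `f`, and every orbit in `ℝ∖{0}` converges to this 2-cycle: the even iterates of any
`x ≠ 0` converge to `p` or to `−p`. -/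
theorem orbits_converge_to_two_cycle
    (μ : ℝ) (hμ : μ < -1) (f : ℝ → ℝ) (hf : f = fun x => (1 / μ) * (x + 1 / x))
    (p : ℝ) (hp : p = 1 / Real.sqrt (-μ - 1)) :
    f p = -p ∧ f (-p) = p ∧
    ∀ x : ℝ, x ≠ 0 → ∃ ε : ℝ, (ε = 1 ∨ ε = -1) ∧
      Filter.Tendsto (fun n : ℕ => f^[2 * n] x) Filter.atTop (nhds (ε * p)) := by
  have hp0 : 0 < p := by rw [hp]; exact one_div_pos.2 (Real.sqrt_pos.2 (by linarith))
  have hpc : p ^ 2 * (-μ - 1) = 1 := by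
    rw [hp, div_pow, one_pow, Real.sq_sqrt (by linarith), one_div_mul_cancel (by linarith)]
  have hfh : f = fun x => -scaledJoukowski (-μ) x := by
    rw [hf]; funext x; rw [scaledJoukowski, div_neg]; ring
  have hfix := scaledJoukowski_eq_self hp0 hpc
  refine ⟨by simp [hfh, hfix], by simp [hfh, scaledJoukowski_neg, hfix], fun x hx => ?_⟩
  have htwo : Tendsto (fun n : ℕ => 2 * n) atTop atTop :=
    (strictMono_mul_left_of_pos two_pos).tendsto_atTop
  simp only [hfh, iterate_two_mul_neg_comp (scaledJoukowski_neg (-μ))]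
  rcases hx.lt_or_gt with hx | hx
  · refine ⟨-1, Or.inr rfl, ?_⟩
    have hodd n := ((Function.Commute.iterate_left (scaledJoukowski_neg (-μ)) n) (-x)).symm
    simp only [neg_neg] at hodd
    simpa [hodd, Function.comp_def] using
      ((tendsto_iterate_scaledJoukowski hp0 hpc (neg_pos.2 hx)).comp htwo).neg
  · refine ⟨1, Or.inl rfl, ?_⟩
    simpa [Function.comp_def] using (tendsto_iterate_scaledJoukowski hp0 hpc hx).comp htwo
end
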